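/- Let f : (0,∞) → [0,∞) be absolutely continuous with lim_{r→0} f(r) = 0 and lim_{r→∞} f(r) = 0. Then ( ∫_0^∞ r |f'(r)|² dr ) · ( ∫_0^∞ |f(r)|²/r dr ) ≥ ‖f‖_{L^∞(0,∞)}⁴. -/

import Mathlib

/-
Since `(f²)' = 2 f f'`, for `0 < c ≤ x ≤ d` we get
`2 f(x)² = f(c)² + f(d)² + 2 ∫_c^x f f' - 2 ∫_x^d f f' ≤ f(c)² + f(d)² + 2 ∫_0^∞ |f f'|`,
and letting `c → 0`, `d → ∞` gives `‖f‖_∞² ≤ ∫_0^∞ |f f'|`. Writing `|f f'| = (|f| / √r) (√r |f'|)`,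
the Cauchy–Schwarz inequality bounds `(∫_0^∞ |f f'|)²` by the product of the two integrals.
-/

open MeasureTheory
open scoped ENNReal

noncomputable section

/-- `f` is (locally) absolutely continuous on `(0,∞)` with derivative `f'`:
the fundamental theorem of calculus holds on every compact subinterval. -/
def ACDerivOn (f f' : ℝ → ℝ) : Prop :=
  ∀ a b : ℝ, 0 < a → a ≤ b →
    IntegrableOn f' (Set.Icc a b) ∧ f b - f a = ∫ t in a..b, f' t

open Set Filter Topology

theorem lintegral_enorm_mul_sq_le {α : Type*} [MeasurableSpace α] {μ : Measure α}
    {u v w : α → ℝ} (hu : AEMeasurable u μ) (hv : AEMeasurable v μ) (hw : AEMeasurable w μ)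
    (hw0 : ∀ᵐ a ∂μ, 0 < w a) :
    (∫⁻ a, ‖u a * v a‖ₑ ∂μ) ^ 2 ≤
      (∫⁻ a, ENNReal.ofReal (u a ^ 2 / w a) ∂μ) * ∫⁻ a, ENNReal.ofReal (w a * v a ^ 2) ∂μ := by
  set F := fun a => ENNReal.ofReal (u a ^ 2 / w a)
  set G := fun a => ENNReal.ofReal (w a * v a ^ 2)
  have hF : AEMeasurable F μ := by fun_prop
  have hG : AEMeasurable G μ := by fun_prop
  have hpt : ∀ᵐ a ∂μ, ‖u a * v a‖ₑ = F a ^ (1 / 2 : ℝ) * G a ^ (1 / 2 : ℝ) := by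
    filter_upwards [hw0] with a ha
    rw [← ENNReal.mul_rpow_of_nonneg _ _ (by norm_num), ← ENNReal.ofReal_mul (by positivity),
      ENNReal.ofReal_rpow_of_nonneg (by positivity) (by norm_num), ← Real.sqrt_eq_rpow,
      Real.enorm_eq_ofReal_abs, ← Real.sqrt_sq_eq_abs]
    congr 2
    field_simp
  have hhalf : ∀ X : ℝ≥0∞, (X ^ (1 / 2 : ℝ)) ^ 2 = X := fun X => by
    rw [← ENNReal.rpow_mul_natCast]; norm_num
  calc (∫⁻ a, ‖u a * v a‖ₑ ∂μ) ^ 2 = (∫⁻ a, F a ^ (1 / 2 : ℝ) * G a ^ (1 / 2 : ℝ) ∂μ) ^ 2 := by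
        rw [lintegral_congr_ae hpt]
    _ ≤ ((∫⁻ a, F a ∂μ) ^ (1 / 2 : ℝ) * (∫⁻ a, G a ∂μ) ^ (1 / 2 : ℝ)) ^ 2 := by
        gcongr
        exact ENNReal.lintegral_mul_norm_pow_le hF hG (by norm_num) (by norm_num) (by norm_num)
    _ = (∫⁻ a, F a ∂μ) * ∫⁻ a, G a ∂μ := by rw [mul_pow, hhalf, hhalf]

theorem eLpNorm_top_pow_le_of_ae_enorm_pow_le {α ε : Type*} [MeasurableSpace α] {μ : Measure α}
    [TopologicalSpace ε] [ContinuousENorm ε] {g : α → ε} {n : ℕ} (hn : n ≠ 0) {C : ℝ≥0∞}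
    (h : ∀ᵐ x ∂μ, ‖g x‖ₑ ^ n ≤ C) : eLpNorm g ⊤ μ ^ n ≤ C := by
  have hroot : (C ^ (n⁻¹ : ℝ)) ^ n = C := by
    rw [← ENNReal.rpow_mul_natCast, inv_mul_cancel₀ (Nat.cast_ne_zero.2 hn), ENNReal.rpow_one]
  have hbound : ∀ᵐ x ∂μ, ‖g x‖ₑ ≤ C ^ (n⁻¹ : ℝ) := h.mono fun x hx => by
    rwa [← ENNReal.pow_le_pow_left_iff hn, hroot]
  calc eLpNorm g ⊤ μ ^ n ≤ (C ^ (n⁻¹ : ℝ)) ^ n := by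
        gcongr
        rw [eLpNorm_exponent_top]
        exact eLpNormEssSup_le_of_ae_enorm_bound hbound
    _ = C := hroot

namespace ACDerivOn

variable {f f' : ℝ → ℝ}

theorem intervalIntegrable (hf : ACDerivOn f f') {a b : ℝ} (ha : 0 < a) (hb : 0 < b) :
    IntervalIntegrable f' volume a b := by
  rcases le_total a b with hab | hba
  · exact (intervalIntegrable_iff_integrableOn_Icc_of_le hab).2 (hf a b ha hab).1
  · exact ((intervalIntegrable_iff_integrableOn_Icc_of_le hba).2 (hf b a hb hba).1).symm

theorem eq_add_integral (hf : ACDerivOn f f') {a x : ℝ} (ha : 0 < a) (hx : 0 < x) :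
    f x = f a + ∫ t in a..x, f' t := by
  rcases le_total a x with hax | hxa
  · linarith [(hf a x ha hax).2]
  · rw [intervalIntegral.integral_symm]
    linarith [(hf x a hx hxa).2]

theorem continuousOn (hf : ACDerivOn f f') : ContinuousOn f (Ioi 0) := by
  intro x hx
  have hx2 : 0 < x / 2 := half_pos hx
  have hle : x / 2 ≤ 2 * x := by linarith
  have hprim : ContinuousOn (fun y => f (x / 2) + ∫ t in x / 2..y, f' t) (Icc (x / 2) (2 * x)) := by
    have hint := (hf (x / 2) (2 * x) hx2 hle).1
    rw [← uIcc_of_le hle] at hint ⊢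
    exact continuousOn_const.add (intervalIntegral.continuousOn_primitive_interval hint)
  have hcongr : EqOn (fun y => f (x / 2) + ∫ t in x / 2..y, f' t) f (Icc (x / 2) (2 * x)) :=
    fun y hy => (hf.eq_add_integral hx2 (hx2.trans_le hy.1)).symm
  exact ((hprim.congr hcongr.symm).continuousAt
    (Icc_mem_nhds (by linarith) (by linarith))).continuousWithinAt

theorem locallyIntegrableOn (hf : ACDerivOn f f') : LocallyIntegrableOn f' (Ioi 0) := by
  rw [locallyIntegrableOn_iff isOpen_Ioi.isLocallyClosed]
  intro k hk hkc
  rcases k.eq_empty_or_nonempty with rfl | hne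
  · exact integrableOn_empty
  obtain ⟨a, ha, hamin⟩ := hkc.exists_isMinOn hne continuousOn_id
  obtain ⟨b, hb, hbmax⟩ := hkc.exists_isMaxOn hne continuousOn_id
  exact (hf a b (hk ha) (hamin hb)).1.mono_set fun y hy => ⟨hamin hy, hbmax hy⟩

theorem sq_sub_sq (hf : ACDerivOn f f') {a b : ℝ} (ha : 0 < a) (hb : 0 < b) :
    f b ^ 2 - f a ^ 2 = ∫ t in a..b, 2 * (f t * f' t) := by
  set F : ℝ → ℝ := fun y => f a + ∫ t in a..y, f' t
  have hint := hf.intervalIntegrable ha hb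
  have hpos : ∀ y ∈ uIcc a b, 0 < y := fun y hy => lt_min ha hb |>.trans_le hy.1
  have hFf : EqOn F f (uIcc a b) := fun y hy => (hf.eq_add_integral ha (hpos y hy)).symm
  have hFac : AbsolutelyContinuousOnInterval F a b :=
    (LipschitzWith.const (f a)).lipschitzOnWith.absolutelyContinuousOnInterval.add
      (hint.absolutelyContinuousOnInterval_intervalIntegral left_mem_uIcc)
  have hderiv : ∀ᵐ y, y ∈ uIoc a b → deriv F y = f' y := by
    filter_upwards [hint.ae_hasDerivAt_integral] with y hy hyab
    exact ((hy (uIoc_subset_uIcc hyab) a left_mem_uIcc).const_add (f a)).deriv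
  calc f b ^ 2 - f a ^ 2 = F b * F b - F a * F a := by
        rw [hFf right_mem_uIcc, hFf left_mem_uIcc]; ring
    _ = ∫ t in a..b, deriv F t * F t + F t * deriv F t :=
        (hFac.integral_deriv_mul_eq_sub hFac).symm
    _ = ∫ t in a..b, 2 * (f t * f' t) := by
        refine intervalIntegral.integral_congr_ae ?_
        filter_upwards [hderiv] with t ht htab
        rw [ht htab, hFf (uIoc_subset_uIcc htab)]
        ring

theorem sq_le_integral_norm_mul (hf : ACDerivOn f f')
    (hlim0 : Tendsto f (𝓝[>] 0) (𝓝 0)) (hliminf : Tendsto f atTop (𝓝 0))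
    (hint : IntegrableOn (fun t => f t * f' t) (Ioi 0)) {x : ℝ} (hx : 0 < x) :
    f x ^ 2 ≤ ∫ t in Ioi 0, ‖f t * f' t‖ := by
  set I := ∫ t in Ioi 0, ‖f t * f' t‖
  have hbound : ∀ c d, 0 < c → c ≤ x → x ≤ d → 2 * f x ^ 2 ≤ f c ^ 2 + f d ^ 2 + 2 * I := by
    intro c d hc hcx hxd
    have hd : 0 < d := hx.trans_le hxd
    have hsub : ∀ a b : ℝ, 0 < a → 0 < b → uIcc a b ⊆ Ioi 0 :=
      fun _ _ ha hb y hy => (lt_min ha hb).trans_le hy.1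
    have hcx' := (hint.mono_set (hsub c x hc hx)).intervalIntegrable
    have hxd' := (hint.mono_set (hsub x d hx hd)).intervalIntegrable
    have hleft := intervalIntegral.norm_integral_le_integral_norm (f := fun t => f t * f' t)
      (μ := volume) hcx
    have hright := intervalIntegral.norm_integral_le_integral_norm (f := fun t => f t * f' t)
      (μ := volume) hxd
    rw [Real.norm_eq_abs] at hleft hright
    have hsplit := intervalIntegral.integral_add_adjacent_intervals hcx'.norm hxd'.norm
    have hmono : ∫ t in c..d, ‖f t * f' t‖ ≤ I := by
      rw [intervalIntegral.integral_of_le (hcx.trans hxd)]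
      exact setIntegral_mono_set hint.norm (Eventually.of_forall fun _ => norm_nonneg _)
        (Eventually.of_forall fun y hy => lt_trans hc hy.1)
    have hcx2 := hf.sq_sub_sq hc hx
    have hxd2 := hf.sq_sub_sq hx hd
    rw [intervalIntegral.integral_const_mul] at hcx2 hxd2
    linarith [abs_le.1 hleft, abs_le.1 hright]
  have hlim : Tendsto (fun p : ℝ × ℝ => f p.1 ^ 2 + f p.2 ^ 2 + 2 * I) (𝓝[>] 0 ×ˢ atTop)
      (𝓝 (0 ^ 2 + 0 ^ 2 + 2 * I)) :=
    (((hlim0.pow 2).comp tendsto_fst).add ((hliminf.pow 2).comp tendsto_snd)).add_const _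
  have hev : ∀ᶠ p : ℝ × ℝ in 𝓝[>] 0 ×ˢ atTop, 2 * f x ^ 2 ≤ f p.1 ^ 2 + f p.2 ^ 2 + 2 * I := by
    filter_upwards [prod_mem_prod (Ioc_mem_nhdsGT hx) (Ici_mem_atTop x)] with p hp
    exact hbound p.1 p.2 hp.1.1 hp.1.2 hp.2
  linarith [ge_of_tendsto hlim hev]

theorem enorm_sq_le_lintegral_enorm_mul (hf : ACDerivOn f f')
    (hlim0 : Tendsto f (𝓝[>] 0) (𝓝 0)) (hliminf : Tendsto f atTop (𝓝 0)) {x : ℝ} (hx : 0 < x) :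
    ‖f x‖ₑ ^ 2 ≤ ∫⁻ t in Ioi 0, ‖f t * f' t‖ₑ := by
  rcases eq_or_ne (∫⁻ t in Ioi 0, ‖f t * f' t‖ₑ) ⊤ with htop | hfin
  · rw [htop]
    exact le_top
  have hint : IntegrableOn (fun t => f t * f' t) (Ioi 0) :=
    ⟨(hf.continuousOn.aestronglyMeasurable measurableSet_Ioi).mul
      hf.locallyIntegrableOn.aestronglyMeasurable, hfin.lt_top⟩
  rw [← ofReal_integral_norm_eq_lintegral_enorm hint, Real.enorm_eq_ofReal_abs,
    ← ENNReal.ofReal_pow (abs_nonneg _), sq_abs]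
  exact ENNReal.ofReal_le_ofReal (hf.sq_le_integral_norm_mul hlim0 hliminf hint hx)

end ACDerivOn

theorem stmt13_general (f f' : ℝ → ℝ) (hAC : ACDerivOn f f')
    (hlim0 : Filter.Tendsto f (nhdsWithin 0 (Set.Ioi 0)) (nhds 0))
    (hliminf : Filter.Tendsto f Filter.atTop (nhds 0)) :
    eLpNorm f ⊤ (volume.restrict (Set.Ioi 0)) ^ 4 ≤
      (∫⁻ r in Set.Ioi (0 : ℝ), ENNReal.ofReal (r * f' r ^ 2)) *
        (∫⁻ r in Set.Ioi (0 : ℝ), ENNReal.ofReal (f r ^ 2 / r)) := by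
  have hbound : ∀ᵐ x ∂volume.restrict (Ioi 0), ‖f x‖ₑ ^ 2 ≤ ∫⁻ t in Ioi 0, ‖f t * f' t‖ₑ :=
    (ae_restrict_mem measurableSet_Ioi).mono fun x hx =>
      hAC.enorm_sq_le_lintegral_enorm_mul hlim0 hliminf hx
  calc eLpNorm f ⊤ (volume.restrict (Ioi 0)) ^ 4
      = (eLpNorm f ⊤ (volume.restrict (Ioi 0)) ^ 2) ^ 2 := by rw [← pow_mul]
    _ ≤ (∫⁻ t in Ioi 0, ‖f t * f' t‖ₑ) ^ 2 := by
        gcongr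
        exact eLpNorm_top_pow_le_of_ae_enorm_pow_le two_ne_zero hbound
    _ ≤ (∫⁻ r in Ioi 0, ENNReal.ofReal (f r ^ 2 / r)) *
          ∫⁻ r in Ioi 0, ENNReal.ofReal (r * f' r ^ 2) :=
        lintegral_enorm_mul_sq_le
          (hAC.continuousOn.aestronglyMeasurable measurableSet_Ioi).aemeasurable
          hAC.locallyIntegrableOn.aestronglyMeasurable.aemeasurable aemeasurable_id'
          (ae_restrict_mem measurableSet_Ioi)
    _ = _ := mul_comm _ _

/-- If `f : (0,∞) → [0,∞)` is absolutely continuous with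
`f(r) → 0` as `r → 0⁺` and as `r → ∞`, then
`(∫_0^∞ r |f'|² dr) (∫_0^∞ |f|²/r dr) ≥ ‖f‖_{L^∞(0,∞)}⁴`. -/
theorem stmt13 (f f' : ℝ → ℝ) (hAC : ACDerivOn f f')
    (hnonneg : ∀ r ∈ Set.Ioi (0 : ℝ), 0 ≤ f r)
    (hlim0 : Filter.Tendsto f (nhdsWithin 0 (Set.Ioi 0)) (nhds 0))
    (hliminf : Filter.Tendsto f Filter.atTop (nhds 0)) :
    eLpNorm f ⊤ (volume.restrict (Set.Ioi 0)) ^ 4 ≤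
      (∫⁻ r in Set.Ioi (0 : ℝ), ENNReal.ofReal (r * f' r ^ 2)) *
        (∫⁻ r in Set.Ioi (0 : ℝ), ENNReal.ofReal (f r ^ 2 / r)) :=
  stmt13_general f f' hAC hlim0 hliminf
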